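/- arXiv:2604.07661 — 5 statements merged into one kernel-verified Lean document; each statement's English description precedes it below -/
import Mathlib

section
/- For every t ∈ ℝ one has t·f_{λ,k}(t) − θ·F_{λ,k}(t) ≥ 0, and moreover F_{λ,k}(t) ≥ F(t) for every t ∈ ℝ. -/
open MeasureTheory Set

noncomputable section

/-! On `[0, ∞)` the truncated nonlinearity is `f_{λ,k} = f + λ g` with
`g = truncatedPower k p q`, so both inequalities are additive in `f` and reduce to `g ≥ 0` and
`θ ∫₀ᵗ g ≤ t g(t)`. The latter is computed explicitly: below `k` it reads `θ t^q / q ≤ t^q`, and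
above `k` the primitive `k^q/q + k^(q-p) (t^p - k^p)/p` is at most `k^(q-p) t^p / p` because
`q ≥ p`. -/

lemma Real.mul_rpow_sub_one {x : ℝ} (hx : 0 ≤ x) {r : ℝ} (hr : r ≠ 0) :
    x * x ^ (r - 1) = x ^ r := by
  conv_rhs => rw [show r = 1 + (r - 1) by ring, Real.rpow_add' hx (by simpa using hr)]
  rw [Real.rpow_one]

lemma intervalIntegral.integral_eq_zero_of_nonpos {φ : ℝ → ℝ} (hφ : ∀ τ ≤ 0, φ τ = 0)
    {t : ℝ} (ht : t ≤ 0) : ∫ τ in (0 : ℝ)..t, φ τ = 0 := by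
  rw [intervalIntegral.integral_congr (g := fun _ => 0) fun τ hτ => hφ τ ?_]
  · simp
  · rw [uIcc_of_ge ht] at hτ
    exact hτ.2

def truncatedPower (k p q t : ℝ) : ℝ :=
  if t ≤ k then t ^ (q - 1) else k ^ (q - p) * t ^ (p - 1)

section truncatedPower

variable {k p q t : ℝ}

lemma truncatedPower_nonneg (hk : 0 ≤ k) (ht : 0 ≤ t) : 0 ≤ truncatedPower k p q t := by
  unfold truncatedPower
  split_ifs
  · exact Real.rpow_nonneg ht _
  · exact mul_nonneg (Real.rpow_nonneg hk _) (Real.rpow_nonneg ht _)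

lemma continuous_truncatedPower (hk : 0 < k) (hp : 1 ≤ p) (hpq : p ≤ q) :
    Continuous (truncatedPower k p q) := by
  refine Continuous.if_le (Real.continuous_rpow_const (by linarith))
    (continuous_const.mul (Real.continuous_rpow_const (by linarith))) continuous_id
    continuous_const fun t (htk : t = k) => ?_
  rw [htk, ← Real.rpow_add hk]
  ring_nf

lemma integral_truncatedPower_of_le (hk : 0 ≤ k) (hq : 0 < q) (htk : t ≤ k) :
    ∫ τ in (0 : ℝ)..t, truncatedPower k p q τ = t ^ q / q := by
  have hEq : EqOn (truncatedPower k p q) (fun τ => τ ^ (q - 1)) (uIcc 0 t) := fun τ hτ =>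
    if_pos ((le_max_iff.mp hτ.2).elim (·.trans hk) (·.trans htk))
  rw [intervalIntegral.integral_congr hEq, integral_rpow (.inl (by linarith)),
    sub_add_cancel, Real.zero_rpow hq.ne', sub_zero]

lemma integral_truncatedPower_of_ge (hk : 0 < k) (hp : 1 ≤ p) (hpq : p ≤ q) (hkt : k ≤ t) :
    ∫ τ in (0 : ℝ)..t, truncatedPower k p q τ
      = k ^ q / q + k ^ (q - p) * ((t ^ p - k ^ p) / p) := by
  have hg := continuous_truncatedPower hk hp hpq
  have hEq : EqOn (truncatedPower k p q) (fun τ => k ^ (q - p) * τ ^ (p - 1)) (Ioc k t) :=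
    fun τ hτ => if_neg (not_le.mpr hτ.1)
  rw [← intervalIntegral.integral_add_adjacent_intervals (b := k) (hg.intervalIntegrable _ _)
      (hg.intervalIntegrable _ _), integral_truncatedPower_of_le hk.le (by linarith) le_rfl,
    intervalIntegral.integral_congr_ae (g := fun τ => k ^ (q - p) * τ ^ (p - 1))
      (ae_of_all _ fun τ hτ => hEq (by rwa [uIoc_of_le hkt] at hτ)),
    intervalIntegral.integral_const_mul, integral_rpow (.inl (by linarith)), sub_add_cancel]

lemma mul_integral_truncatedPower_le {θ : ℝ} (hθ : 0 ≤ θ) (hθp : θ ≤ p) (hp : 1 ≤ p)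
    (hpq : p ≤ q) (hk : 0 < k) (ht : 0 ≤ t) :
    θ * ∫ τ in (0 : ℝ)..t, truncatedPower k p q τ ≤ t * truncatedPower k p q t := by
  have hq : 0 < q := by linarith
  rcases le_or_gt t k with htk | hkt
  · rw [integral_truncatedPower_of_le hk.le hq htk, truncatedPower, if_pos htk,
      Real.mul_rpow_sub_one ht hq.ne', mul_div_assoc', div_le_iff₀ hq, mul_comm _ q]
    exact mul_le_mul_of_nonneg_right (by linarith) (Real.rpow_nonneg ht q)
  · have hkt' := hkt.le
    have hkq : k ^ q = k ^ (q - p) * k ^ p := by rw [← Real.rpow_add hk, sub_add_cancel]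
    have hkp : k ^ p ≤ t ^ p := Real.rpow_le_rpow hk.le hkt' (by linarith)
    have hprim : k ^ q / q + k ^ (q - p) * ((t ^ p - k ^ p) / p) ≤ k ^ (q - p) * (t ^ p / p) := by
      rw [hkq, mul_div_assoc, ← mul_add]
      refine mul_le_mul_of_nonneg_left ?_ (Real.rpow_nonneg hk.le _)
      have : k ^ p / q ≤ k ^ p / p :=
        div_le_div_of_nonneg_left (Real.rpow_nonneg hk.le _) (by linarith) hpq
      linarith [show (t ^ p - k ^ p) / p = t ^ p / p - k ^ p / p from sub_div _ _ _]
    rw [integral_truncatedPower_of_ge hk hp hpq hkt', truncatedPower, if_neg (not_le.mpr hkt),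
      mul_left_comm, Real.mul_rpow_sub_one ht (by linarith)]
    calc θ * (k ^ q / q + k ^ (q - p) * ((t ^ p - k ^ p) / p))
        ≤ θ * (k ^ (q - p) * (t ^ p / p)) := mul_le_mul_of_nonneg_left hprim hθ
      _ = k ^ (q - p) * (θ / p * t ^ p) := by ring
      _ ≤ k ^ (q - p) * t ^ p := by
        refine mul_le_mul_of_nonneg_left ?_ (Real.rpow_nonneg hk.le _)
        exact mul_le_of_le_one_left (Real.rpow_nonneg (by linarith) _)
          ((div_le_one (by linarith)).mpr hθp)

end truncatedPower

theorem statement_3_general (f : ℝ → ℝ) (hf_cont : Continuous f)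
    (hf_zero : ∀ t : ℝ, t ≤ 0 → f t = 0)
    (θ p q : ℝ) (hθ2 : 2 < θ) (hθp : θ < p) (hpq : p < q)
    (hf2 : ∀ t : ℝ, θ * (∫ τ in (0 : ℝ)..t, f τ) ≤ t * f t)
    (lam : ℝ) (hlam : 0 < lam) (k : ℕ) (hk : 0 < k)
    (flk : ℝ → ℝ)
    (hflk_neg : ∀ t : ℝ, t < 0 → flk t = 0)
    (hflk_mid : ∀ t : ℝ, 0 ≤ t → t ≤ (k : ℝ) → flk t = f t + lam * t ^ (q - 1))
    (hflk_top : ∀ t : ℝ, (k : ℝ) ≤ t →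
      flk t = f t + lam * (k : ℝ) ^ (q - p) * t ^ (p - 1)) :
    ∀ t : ℝ,
      0 ≤ t * flk t - θ * (∫ τ in (0 : ℝ)..t, flk τ) ∧
      (∫ τ in (0 : ℝ)..t, f τ) ≤ ∫ τ in (0 : ℝ)..t, flk τ := by
  have hk' : (0 : ℝ) < k := Nat.cast_pos.mpr hk
  have hflk : ∀ τ, 0 ≤ τ → flk τ = f τ + lam * truncatedPower k p q τ := fun τ hτ => by
    unfold truncatedPower
    split_ifs with hτk
    · exact hflk_mid τ hτ hτk
    · rw [hflk_top τ (not_le.mp hτk).le, mul_assoc]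
  intro t
  rcases le_or_gt t 0 with ht | ht
  · have hflk_nonpos : ∀ τ ≤ 0, flk τ = 0 := fun τ hτ =>
      hτ.lt_or_eq.elim (hflk_neg τ) fun h0 => by
        rw [h0, hflk 0 le_rfl, hf_zero 0 le_rfl, truncatedPower, if_pos hk'.le,
          Real.zero_rpow (by linarith)]
        ring
    simp [intervalIntegral.integral_eq_zero_of_nonpos hflk_nonpos ht,
      intervalIntegral.integral_eq_zero_of_nonpos hf_zero ht, hflk_nonpos t ht]
  · have hg := continuous_truncatedPower hk' (by linarith) hpq.le
    have hsplit : ∫ τ in (0 : ℝ)..t, flk τ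
        = (∫ τ in (0 : ℝ)..t, f τ) + lam * ∫ τ in (0 : ℝ)..t, truncatedPower k p q τ := by
      rw [intervalIntegral.integral_congr fun τ hτ => hflk τ (uIcc_of_le ht.le ▸ hτ).1,
        intervalIntegral.integral_add (hf_cont.intervalIntegrable _ _)
          ((hg.intervalIntegrable _ _).const_mul lam), intervalIntegral.integral_const_mul]
    have hAR := mul_integral_truncatedPower_le (by linarith) hθp.le (by linarith) hpq.le hk' ht.le
    have hpos : 0 ≤ ∫ τ in (0 : ℝ)..t, truncatedPower k p q τ :=
      intervalIntegral.integral_nonneg ht.le fun τ hτ => truncatedPower_nonneg hk'.le hτ.1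
    rw [hsplit, hflk t ht.le]
    exact ⟨by linarith [hf2 t, mul_le_mul_of_nonneg_left hAR hlam.le],
      le_add_of_nonneg_right (mul_nonneg hlam.le hpos)⟩

/-- For the truncated nonlinearity `f_{λ,k}` one has
`t f_{λ,k}(t) − θ F_{λ,k}(t) ≥ 0` and `F_{λ,k}(t) ≥ F(t)` for all `t`. -/
theorem statement_3 (f : ℝ → ℝ) (hf_cont : Continuous f)
    (hf_nonneg : ∀ t : ℝ, 0 < t → 0 ≤ f t)
    (hf_zero : ∀ t : ℝ, t ≤ 0 → f t = 0)
    (θ p q : ℝ) (hθ2 : 2 < θ) (hθp : θ < p) (hpq : p < q)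
    (hf2 : ∀ t : ℝ, θ * (∫ τ in (0 : ℝ)..t, f τ) ≤ t * f t)
    (lam : ℝ) (hlam : 0 < lam) (k : ℕ) (hk : 0 < k)
    (flk : ℝ → ℝ)
    (hflk_neg : ∀ t : ℝ, t < 0 → flk t = 0)
    (hflk_mid : ∀ t : ℝ, 0 ≤ t → t ≤ (k : ℝ) → flk t = f t + lam * t ^ (q - 1))
    (hflk_top : ∀ t : ℝ, (k : ℝ) ≤ t →
      flk t = f t + lam * (k : ℝ) ^ (q - p) * t ^ (p - 1)) :
    ∀ t : ℝ,
      0 ≤ t * flk t - θ * (∫ τ in (0 : ℝ)..t, flk τ) ∧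
      (∫ τ in (0 : ℝ)..t, f τ) ≤ ∫ τ in (0 : ℝ)..t, flk τ :=
  statement_3_general f hf_cont hf_zero θ p q hθ2 hθp hpq hf2 lam hlam k hk flk hflk_neg hflk_mid
    hflk_top
end
end

section
/- For every u ∈ E, the coercivity inequality ((1/2)‖u‖² − ∫_{ℝ^N} G_{λ,k}(x,u) dx) − (1/θ)(‖u‖² − ∫_{ℝ^N} g_{λ,k}(x,u)·u dx) ≥ ((θ−2)/(4θ))‖u‖² holds; in particular every Palais–Smale sequence of the functional J_{λ,k}(u) := (1/2)‖u‖² − ∫_{ℝ^N} G_{λ,k}(x,u) dx is bounded in E. -/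
/-!
Inside the ball `g_{λ,k} = f_{λ,k}` inherits the Ambrosetti–Rabinowitz condition `θ F ≤ t f` from
`f`, because the added power `λ t^{q-1}` (resp. `λ k^{q-p} t^{p-1}`) has exponent `q > p > θ`
(resp. `p > θ`). Outside the ball `g ≤ V t / ν`, so `G ≤ V t² / (2ν) = (θ - 2)/(4θ) V t²`.
Together, `θ G(x,u) ≤ g(x,u) u + (θ - 2)/4 · V u²` pointwise; integrating and using
`∫ V u² ≤ ‖u‖²` gives the inequality. For a Palais–Smale sequence the left-hand side is at most
`J(u_n) + ε_n ‖u_n‖ / θ`, so `c ‖u_n‖² ≤ C + C' ‖u_n‖` and `‖u_n‖` is bounded.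
-/

open MeasureTheory Filter Topology

noncomputable section

/-- The energy space `E`. -/
def memE (N : ℕ) (K V : EuclideanSpace ℝ (Fin N) → ℝ)
    (u : EuclideanSpace ℝ (Fin N) → ℝ) : Prop :=
  Measurable u ∧
  Integrable (fun z : EuclideanSpace ℝ (Fin N) × EuclideanSpace ℝ (Fin N) =>
    (u z.1 - u z.2) ^ 2 * K (z.1 - z.2)) ∧
  Integrable (fun x => V x * u x ^ 2)

/-- The norm of the energy space `E`. -/
def normE (N : ℕ) (K V : EuclideanSpace ℝ (Fin N) → ℝ)
    (u : EuclideanSpace ℝ (Fin N) → ℝ) : ℝ :=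
  Real.sqrt ((∫ z : EuclideanSpace ℝ (Fin N) × EuclideanSpace ℝ (Fin N),
    (u z.1 - u z.2) ^ 2 * K (z.1 - z.2)) + ∫ x, V x * u x ^ 2)

/-- The inner product of the energy space `E`. -/
def innerE (N : ℕ) (K V : EuclideanSpace ℝ (Fin N) → ℝ)
    (u v : EuclideanSpace ℝ (Fin N) → ℝ) : ℝ :=
  (∫ z : EuclideanSpace ℝ (Fin N) × EuclideanSpace ℝ (Fin N),
    (u z.1 - u z.2) * (v z.1 - v z.2) * K (z.1 - z.2)) + ∫ x, V x * u x * v x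

/-- The truncated nonlinearity `f_{λ,k}`. -/
def flk (f : ℝ → ℝ) (lam : ℝ) (k : ℕ) (p q : ℝ) (t : ℝ) : ℝ :=
  if t < 0 then 0
  else if t ≤ (k : ℝ) then f t + lam * t ^ (q - 1)
  else f t + lam * (k : ℝ) ^ (q - p) * t ^ (p - 1)

/-- The penalized nonlinearity `g_{λ,k}`, with `ν = 2θ/(θ−2)`. -/
def glk (N : ℕ) (V : EuclideanSpace ℝ (Fin N) → ℝ) (f : ℝ → ℝ)
    (lam : ℝ) (k : ℕ) (p q θ R : ℝ) (x : EuclideanSpace ℝ (Fin N)) (t : ℝ) : ℝ :=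
  if ‖x‖ ≤ R then flk f lam k p q t
  else if 0 ≤ t then min (flk f lam k p q t) (V x * t / (2 * θ / (θ - 2)))
  else 0

/-- Its primitive `G_{λ,k}`. -/
def Glk (N : ℕ) (V : EuclideanSpace ℝ (Fin N) → ℝ) (f : ℝ → ℝ)
    (lam : ℝ) (k : ℕ) (p q θ R : ℝ) (x : EuclideanSpace ℝ (Fin N)) (t : ℝ) : ℝ :=
  ∫ τ in (0 : ℝ)..t, glk N V f lam k p q θ R x τ

/-- The auxiliary energy functional `J_{λ,k}`. -/
def Jlk (N : ℕ) (K V : EuclideanSpace ℝ (Fin N) → ℝ) (f : ℝ → ℝ)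
    (lam : ℝ) (k : ℕ) (p q θ R : ℝ) (u : EuclideanSpace ℝ (Fin N) → ℝ) : ℝ :=
  (1 / 2) * (normE N K V u) ^ 2 - ∫ x, Glk N V f lam k p q θ R x (u x)

lemma intervalIntegral_eq_zero_of_nonpos {g : ℝ → ℝ} (hg : ∀ τ ≤ 0, g τ = 0) {t : ℝ}
    (ht : t ≤ 0) : ∫ τ in (0 : ℝ)..t, g τ = 0 := by
  rw [intervalIntegral.integral_congr (g := fun _ => (0 : ℝ)), intervalIntegral.integral_zero]
  intro τ hτ
  rw [Set.uIcc_of_ge ht] at hτ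
  exact hg τ hτ.2

lemma rpow_sub_one_mul_self {t : ℝ} (ht : 0 ≤ t) {r : ℝ} (hr : 1 < r) :
    t ^ (r - 1) * t = t ^ r := by
  rw [← Real.rpow_add_one' ht (by linarith), sub_add_cancel]

lemma rpow_sub_mul_rpow {κ : ℝ} (hκ : 0 < κ) (p q : ℝ) : κ ^ (q - p) * κ ^ p = κ ^ q := by
  rw [← Real.rpow_add hκ, sub_add_cancel]

/-- `f_{λ,k} - f` for `κ = k`; the `max t 0` makes it vanish for `t ≤ 0` (as `q > 1`) while
keeping it continuous. -/
def truncPow (lam κ p q t : ℝ) : ℝ :=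
  if t ≤ κ then lam * (max t 0) ^ (q - 1) else lam * κ ^ (q - p) * t ^ (p - 1)

section TruncPow

variable {lam κ p q t : ℝ}

lemma truncPow_of_le (ht : 0 ≤ t) (htκ : t ≤ κ) : truncPow lam κ p q t = lam * t ^ (q - 1) := by
  rw [truncPow, if_pos htκ, max_eq_left ht]

lemma truncPow_of_ge (hκ : 0 < κ) (htκ : κ ≤ t) :
    truncPow lam κ p q t = lam * κ ^ (q - p) * t ^ (p - 1) := by
  rcases htκ.eq_or_lt with rfl | htκ
  · rw [truncPow_of_le hκ.le le_rfl, mul_assoc, ← Real.rpow_add hκ, sub_add_sub_cancel]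
  · rw [truncPow, if_neg htκ.not_ge]

lemma truncPow_of_nonpos (hq : 1 < q) (hκ : 0 ≤ κ) (ht : t ≤ 0) : truncPow lam κ p q t = 0 := by
  rw [truncPow, if_pos (ht.trans hκ), max_eq_right ht, Real.zero_rpow (by linarith), mul_zero]

lemma continuous_truncPow (hκ : 0 < κ) (hp : 1 < p) (hq : 1 < q) :
    Continuous (truncPow lam κ p q) := by
  refine Continuous.if_le ?_ ?_ continuous_id continuous_const fun t ht => ?_
  · exact continuous_const.mul
      ((Real.continuous_rpow_const (by linarith)).comp (continuous_id.max continuous_const))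
  · exact continuous_const.mul (Real.continuous_rpow_const (by linarith))
  · subst ht
    rw [max_eq_left hκ.le, mul_assoc, ← Real.rpow_add hκ, sub_add_sub_cancel]

lemma integral_truncPow_of_le (hq : 1 < q) (ht : 0 ≤ t) (htκ : t ≤ κ) :
    ∫ τ in (0 : ℝ)..t, truncPow lam κ p q τ = lam * t ^ q / q := by
  rw [intervalIntegral.integral_congr (g := fun τ => lam * τ ^ (q - 1)),
    intervalIntegral.integral_const_mul, integral_rpow (Or.inl (by linarith)), sub_add_cancel,
    Real.zero_rpow (by linarith), sub_zero, mul_div_assoc]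
  intro τ hτ
  rw [Set.uIcc_of_le ht] at hτ
  exact truncPow_of_le hτ.1 (hτ.2.trans htκ)

lemma integral_truncPow_of_ge (hκ : 0 < κ) (hp : 1 < p) (hq : 1 < q) (ht : κ ≤ t) :
    ∫ τ in (0 : ℝ)..t, truncPow lam κ p q τ
      = lam * κ ^ q / q + lam * κ ^ (q - p) * ((t ^ p - κ ^ p) / p) := by
  have hint := (continuous_truncPow (lam := lam) hκ hp hq).intervalIntegrable (μ := volume)
  rw [← intervalIntegral.integral_add_adjacent_intervals (hint 0 κ) (hint κ t),
    integral_truncPow_of_le hq hκ.le le_rfl,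
    intervalIntegral.integral_congr (g := fun τ => lam * κ ^ (q - p) * τ ^ (p - 1)),
    intervalIntegral.integral_const_mul, integral_rpow (Or.inl (by linarith)), sub_add_cancel]
  intro τ hτ
  rw [Set.uIcc_of_le ht] at hτ
  exact truncPow_of_ge hκ hτ.1

lemma mul_integral_truncPow_le {θ : ℝ} (hlam : 0 ≤ lam) (hκ : 0 < κ) (hp : 1 < p)
    (hθ : 0 ≤ θ) (hθp : θ ≤ p) (hpq : p < q) (ht : 0 ≤ t) :
    θ * ∫ τ in (0 : ℝ)..t, truncPow lam κ p q τ ≤ t * truncPow lam κ p q t := by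
  have hq : 1 < q := hp.trans hpq
  rcases le_total t κ with htκ | htκ
  · rw [integral_truncPow_of_le hq ht htκ, truncPow_of_le ht htκ, mul_left_comm, mul_comm t,
      rpow_sub_one_mul_self ht hq, mul_div_assoc', div_le_iff₀ (by linarith), mul_comm θ]
    exact mul_le_mul_of_nonneg_left (by linarith) (mul_nonneg hlam (Real.rpow_nonneg ht q))
  · rw [integral_truncPow_of_ge hκ hp hq htκ, truncPow_of_ge hκ htκ, mul_comm t,
      mul_assoc _ _ t, rpow_sub_one_mul_self (hκ.le.trans htκ) hp, ← rpow_sub_mul_rpow hκ p q]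
    set c := lam * κ ^ (q - p)
    have hc : 0 ≤ c := by positivity
    have htp : κ ^ p ≤ t ^ p := Real.rpow_le_rpow hκ.le htκ (by linarith)
    have hκp : 0 ≤ c * κ ^ p := mul_nonneg hc (Real.rpow_nonneg hκ.le p)
    have hqp : c * κ ^ p / q ≤ c * κ ^ p / p := div_le_div_of_nonneg_left hκp (by linarith) hpq.le
    calc θ * (lam * (κ ^ (q - p) * κ ^ p) / q + c * ((t ^ p - κ ^ p) / p))
        ≤ θ * (c * t ^ p / p) := by
          rw [← mul_assoc]
          gcongr
          linarith [show c * κ ^ p / p + c * ((t ^ p - κ ^ p) / p) = c * t ^ p / p by ring]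
      _ ≤ c * t ^ p := by
          rw [mul_div_assoc', div_le_iff₀ (by linarith), mul_comm θ]
          exact mul_le_mul_of_nonneg_left hθp (mul_nonneg hc (Real.rpow_nonneg (hκ.le.trans htκ) p))

lemma sub_le_integral_truncPow (hlam : 0 ≤ lam) (hκ : 0 < κ) (hp : 1 < p) (hpq : p < q)
    (ht : 0 ≤ t) :
    lam * κ ^ (q - p) / p * t ^ p - lam * κ ^ q / p ≤ ∫ τ in (0 : ℝ)..t, truncPow lam κ p q τ := by
  have hq : 1 < q := hp.trans hpq
  rw [← rpow_sub_mul_rpow hκ p q]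
  have hc : 0 ≤ lam * κ ^ (q - p) / p := by positivity
  rcases le_total t κ with htκ | htκ
  · rw [integral_truncPow_of_le hq ht htκ]
    have : t ^ p ≤ κ ^ p := Real.rpow_le_rpow ht htκ (by linarith)
    have : 0 ≤ lam * t ^ q / q := by positivity
    calc lam * κ ^ (q - p) / p * t ^ p - lam * (κ ^ (q - p) * κ ^ p) / p
        = lam * κ ^ (q - p) / p * (t ^ p - κ ^ p) := by ring
      _ ≤ 0 := mul_nonpos_of_nonneg_of_nonpos hc (by linarith)
      _ ≤ lam * t ^ q / q := ‹_›
  · rw [integral_truncPow_of_ge hκ hp hq htκ]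
    have : 0 ≤ lam * κ ^ q / q := by positivity
    linarith [show lam * κ ^ (q - p) * ((t ^ p - κ ^ p) / p)
      = lam * κ ^ (q - p) / p * t ^ p - lam * (κ ^ (q - p) * κ ^ p) / p by ring]

lemma truncPow_mul_le (hlam : 0 ≤ lam) (hp : 1 < p) (hpq : p < q) (ht : 0 ≤ t) :
    truncPow lam κ p q t * t ≤ lam * κ ^ (q - p) * t ^ p := by
  rcases le_or_gt t κ with htκ | htκ
  · rw [truncPow_of_le ht htκ, mul_assoc, rpow_sub_one_mul_self ht (hp.trans hpq), mul_assoc]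
    gcongr
    rcases ht.eq_or_lt with rfl | ht'
    · rw [Real.zero_rpow (by linarith), Real.zero_rpow (by linarith), mul_zero]
    · rw [← rpow_sub_mul_rpow ht' p q]
      gcongr
  · rw [truncPow, if_neg htκ.not_ge, mul_assoc, rpow_sub_one_mul_self ht hp]

end TruncPow

lemma exists_mul_self_le_add_rpow {f : ℝ → ℝ} {p C : ℝ} (hf : Continuous f) (hp : 1 < p)
    (hfC : ∀ᶠ t in atTop, f t ≤ C * t ^ (p - 1)) :
    ∃ M C' : ℝ, 0 ≤ M ∧ 0 ≤ C' ∧ ∀ t, 0 ≤ t → f t * t ≤ M + C' * t ^ p := by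
  obtain ⟨T, hT⟩ := eventually_atTop.1 hfC
  obtain ⟨M, hM⟩ := (isCompact_Icc (a := 0) (b := max T 0)).exists_bound_of_continuousOn
    (show Continuous fun t => f t * t from hf.mul continuous_id).continuousOn
  have hM0 : 0 ≤ M := (norm_nonneg _).trans (hM 0 ⟨le_rfl, le_max_right _ _⟩)
  refine ⟨M, |C|, hM0, abs_nonneg C, fun t ht => ?_⟩
  have htp : 0 ≤ |C| * t ^ p := mul_nonneg (abs_nonneg C) (Real.rpow_nonneg ht p)
  rcases le_or_gt t (max T 0) with htT | htT
  · linarith [Real.le_norm_self (f t * t), hM t ⟨ht, htT⟩]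
  · calc f t * t ≤ C * t ^ (p - 1) * t :=
          mul_le_mul_of_nonneg_right (hT t (le_max_left _ _ |>.trans htT.le)) ht
      _ = C * t ^ p := by rw [mul_assoc, rpow_sub_one_mul_self ht hp]
      _ ≤ M + |C| * t ^ p := by
          linarith [mul_le_mul_of_nonneg_right (le_abs_self C) (Real.rpow_nonneg ht p)]

section Flk

variable {f : ℝ → ℝ} {lam p q θ t : ℝ} {k : ℕ}

lemma flk_eq_add (hf_zero : ∀ t ≤ 0, f t = 0) (hq : 1 < q) :
    flk f lam k p q = f + truncPow lam k p q := by
  funext t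
  rcases lt_or_ge t 0 with ht | ht
  · rw [flk, if_pos ht, Pi.add_apply, hf_zero t ht.le,
      truncPow_of_nonpos hq k.cast_nonneg ht.le, add_zero]
  · rw [flk, if_neg ht.not_gt, Pi.add_apply]
    split_ifs with htk
    · rw [truncPow_of_le ht htk]
    · rw [truncPow, if_neg htk]

lemma flk_eq_zero_of_nonpos (hf_zero : ∀ t ≤ 0, f t = 0) (hq : 1 < q) (ht : t ≤ 0) :
    flk f lam k p q t = 0 := by
  rw [flk_eq_add hf_zero hq, Pi.add_apply, hf_zero t ht,
    truncPow_of_nonpos hq k.cast_nonneg ht, add_zero]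

lemma flk_nonneg (hf0 : ∀ t, 0 ≤ t → 0 ≤ f t) (hlam : 0 ≤ lam) (t : ℝ) :
    0 ≤ flk f lam k p q t := by
  unfold flk
  split_ifs with ht htk
  · exact le_rfl
  · exact add_nonneg (hf0 t (not_lt.1 ht)) (mul_nonneg hlam (Real.rpow_nonneg (not_lt.1 ht) _))
  · exact add_nonneg (hf0 t (not_lt.1 ht)) (mul_nonneg
      (mul_nonneg hlam (Real.rpow_nonneg k.cast_nonneg _)) (Real.rpow_nonneg (not_lt.1 ht) _))

lemma continuous_flk (hf : Continuous f) (hf_zero : ∀ t ≤ 0, f t = 0) (hk : 0 < k)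
    (hp : 1 < p) (hq : 1 < q) : Continuous (flk f lam k p q) := by
  rw [flk_eq_add hf_zero hq]
  exact hf.add (continuous_truncPow (by exact_mod_cast hk) hp hq)

lemma integral_flk (hf : Continuous f) (hf_zero : ∀ t ≤ 0, f t = 0) (hk : 0 < k)
    (hp : 1 < p) (hq : 1 < q) :
    ∫ τ in (0 : ℝ)..t, flk f lam k p q τ
      = (∫ τ in (0 : ℝ)..t, f τ) + ∫ τ in (0 : ℝ)..t, truncPow lam k p q τ := by
  rw [flk_eq_add hf_zero hq]
  exact intervalIntegral.integral_add (hf.intervalIntegrable 0 t)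
    ((continuous_truncPow (by exact_mod_cast hk) hp hq).intervalIntegrable 0 t)

lemma mul_integral_flk_le (hf : Continuous f) (hf_zero : ∀ t ≤ 0, f t = 0)
    (hf2 : ∀ t, θ * (∫ τ in (0 : ℝ)..t, f τ) ≤ t * f t) (hk : 0 < k) (hlam : 0 ≤ lam)
    (hp : 1 < p) (hθ : 0 ≤ θ) (hθp : θ ≤ p) (hpq : p < q) (t : ℝ) :
    θ * (∫ τ in (0 : ℝ)..t, flk f lam k p q τ) ≤ t * flk f lam k p q t := by
  have hq : 1 < q := hp.trans hpq
  rcases le_total t 0 with ht | ht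
  · rw [intervalIntegral_eq_zero_of_nonpos (fun τ => flk_eq_zero_of_nonpos hf_zero hq) ht,
      flk_eq_zero_of_nonpos hf_zero hq ht, mul_zero, mul_zero]
  · rw [integral_flk hf hf_zero hk hp hq, flk_eq_add hf_zero hq, Pi.add_apply, mul_add, mul_add]
    exact add_le_add (hf2 t)
      (mul_integral_truncPow_le hlam (by exact_mod_cast hk) hp hθ hθp hpq ht)

/-- The growth bound `f t * t ≲ t^p` combined with the lower bound `F_{λ,k}(t) ≳ t^p`. -/
lemma exists_flk_mul_le_add_integral {C : ℝ} (hf : Continuous f)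
    (hf0 : ∀ t, 0 ≤ t → 0 ≤ f t) (hf_zero : ∀ t ≤ 0, f t = 0)
    (hfC : ∀ᶠ t in atTop, f t ≤ C * t ^ (p - 1)) (hk : 0 < k) (hlam : 0 < lam)
    (hp : 1 < p) (hpq : p < q) :
    ∃ a b : ℝ, 0 ≤ b ∧
      ∀ t, flk f lam k p q t * t ≤ a + b * ∫ τ in (0 : ℝ)..t, flk f lam k p q τ := by
  have hq : 1 < q := hp.trans hpq
  have hk' : (0 : ℝ) < k := by exact_mod_cast hk
  have hp0 : 0 < p := by linarith
  obtain ⟨M, C', hM, hC', hMC⟩ := exists_mul_self_le_add_rpow hf hp hfC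
  set c₂ := lam * (k : ℝ) ^ (q - p) / p
  set c₃ := lam * (k : ℝ) ^ q / p
  set D := C' + lam * (k : ℝ) ^ (q - p)
  have hc₂ : 0 < c₂ := by positivity
  have hD : 0 ≤ D := by positivity
  refine ⟨M + D / c₂ * c₃, D / c₂, by positivity, fun t => ?_⟩
  rcases le_total t 0 with ht | ht
  · rw [flk_eq_zero_of_nonpos hf_zero hq ht, zero_mul,
      intervalIntegral_eq_zero_of_nonpos (fun τ => flk_eq_zero_of_nonpos hf_zero hq) ht]
    positivity
  have hF : 0 ≤ ∫ τ in (0 : ℝ)..t, f τ := intervalIntegral.integral_nonneg ht fun τ hτ => hf0 τ hτ.1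
  have hlow := sub_le_integral_truncPow hlam.le hk' hp hpq ht
  have hup := truncPow_mul_le (κ := k) hlam.le hp hpq ht
  rw [integral_flk hf hf_zero hk hp hq, flk_eq_add hf_zero hq, Pi.add_apply, add_mul]
  calc f t * t + truncPow lam k p q t * t ≤ M + D * t ^ p := by
        linarith [hMC t ht, add_mul C' (lam * (k : ℝ) ^ (q - p)) (t ^ p)]
    _ = M + D / c₂ * (c₂ * t ^ p) := by field_simp
    _ ≤ M + D / c₂ * c₃ + D / c₂ * ((∫ τ in (0 : ℝ)..t, f τ) +
          ∫ τ in (0 : ℝ)..t, truncPow lam k p q τ) := by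
        rw [add_assoc, ← mul_add]
        gcongr
        linarith

end Flk

section Glk

variable {N : ℕ} {V : EuclideanSpace ℝ (Fin N) → ℝ} {f : ℝ → ℝ} {lam p q θ R t : ℝ} {k : ℕ}
  {x : EuclideanSpace ℝ (Fin N)}

lemma glk_of_norm_le (hx : ‖x‖ ≤ R) : glk N V f lam k p q θ R x = flk f lam k p q :=
  funext fun _ => if_pos hx

lemma Glk_of_norm_le (hx : ‖x‖ ≤ R) :
    Glk N V f lam k p q θ R x t = ∫ τ in (0 : ℝ)..t, flk f lam k p q τ := by
  rw [Glk, glk_of_norm_le hx]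

lemma glk_of_norm_gt (hx : R < ‖x‖) (ht : 0 ≤ t) :
    glk N V f lam k p q θ R x t = min (flk f lam k p q t) (V x * t / (2 * θ / (θ - 2))) := by
  rw [glk, if_neg hx.not_ge, if_pos ht]

lemma glk_eq_zero_of_nonpos (hφz : ∀ t ≤ 0, flk f lam k p q t = 0) (ht : t ≤ 0) :
    glk N V f lam k p q θ R x t = 0 := by
  unfold glk
  split_ifs with hx ht'
  · exact hφz t ht
  · rw [le_antisymm ht ht', hφz 0 le_rfl, mul_zero, zero_div, min_self]
  · rfl

lemma glk_nonneg (hφ0 : ∀ t, 0 ≤ flk f lam k p q t) (hθ : 2 < θ) (hV : 0 ≤ V x) (t : ℝ) :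
    0 ≤ glk N V f lam k p q θ R x t := by
  have hν : 0 < 2 * θ / (θ - 2) := div_pos (by linarith) (by linarith)
  unfold glk
  split_ifs with hx ht
  · exact hφ0 t
  · exact le_min (hφ0 t) (div_nonneg (mul_nonneg hV ht) hν.le)
  · exact le_rfl

lemma glk_mul_self_nonneg (hφz : ∀ t ≤ 0, flk f lam k p q t = 0)
    (hφ0 : ∀ t, 0 ≤ flk f lam k p q t) (hθ : 2 < θ) (hV : 0 ≤ V x) (t : ℝ) :
    0 ≤ glk N V f lam k p q θ R x t * t := by
  rcases le_total t 0 with ht | ht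
  · rw [glk_eq_zero_of_nonpos hφz ht, zero_mul]
  · exact mul_nonneg (glk_nonneg hφ0 hθ hV t) ht

lemma Glk_nonneg (hφz : ∀ t ≤ 0, flk f lam k p q t = 0) (hφ0 : ∀ t, 0 ≤ flk f lam k p q t)
    (hθ : 2 < θ) (hV : 0 ≤ V x) (t : ℝ) : 0 ≤ Glk N V f lam k p q θ R x t := by
  rcases le_total t 0 with ht | ht
  · rw [Glk, intervalIntegral_eq_zero_of_nonpos (fun τ => glk_eq_zero_of_nonpos hφz) ht]
  · exact intervalIntegral.integral_nonneg ht fun τ _ => glk_nonneg hφ0 hθ hV τ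

lemma glk_mul_self_le_of_norm_gt (hφz : ∀ t ≤ 0, flk f lam k p q t = 0) (hθ : 2 < θ)
    (hV : 0 ≤ V x) (hx : R < ‖x‖) (t : ℝ) :
    glk N V f lam k p q θ R x t * t ≤ V x * t ^ 2 / (2 * θ / (θ - 2)) := by
  have hν : 0 < 2 * θ / (θ - 2) := div_pos (by linarith) (by linarith)
  rcases le_total t 0 with ht | ht
  · rw [glk_eq_zero_of_nonpos hφz ht, zero_mul]
    positivity
  · calc glk N V f lam k p q θ R x t * t ≤ V x * t / (2 * θ / (θ - 2)) * t := by
          rw [glk_of_norm_gt hx ht]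
          exact mul_le_mul_of_nonneg_right (min_le_right _ _) ht
      _ = V x * t ^ 2 / (2 * θ / (θ - 2)) := by ring

/-- Integrate `g ≤ V τ / ν`; the constant is `1 / (2ν) = (θ - 2) / (4θ)`. -/
lemma Glk_le_of_norm_gt (hφc : Continuous (flk f lam k p q))
    (hφz : ∀ t ≤ 0, flk f lam k p q t = 0) (hθ : 2 < θ) (hV : 0 ≤ V x) (hx : R < ‖x‖)
    (t : ℝ) : Glk N V f lam k p q θ R x t ≤ (θ - 2) / (4 * θ) * (V x * t ^ 2) := by
  rcases le_total t 0 with ht | ht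
  · rw [Glk, intervalIntegral_eq_zero_of_nonpos (fun τ => glk_eq_zero_of_nonpos hφz) ht]
    have : 0 ≤ (θ - 2) / (4 * θ) := div_nonneg (by linarith) (by linarith)
    positivity
  have hlin : Continuous fun τ : ℝ => V x * τ / (2 * θ / (θ - 2)) := by fun_prop
  calc Glk N V f lam k p q θ R x t
      = ∫ τ in (0 : ℝ)..t, min (flk f lam k p q τ) (V x * τ / (2 * θ / (θ - 2))) := by
        refine intervalIntegral.integral_congr fun τ hτ => ?_
        rw [Set.uIcc_of_le ht] at hτ
        exact glk_of_norm_gt hx hτ.1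
    _ ≤ ∫ τ in (0 : ℝ)..t, V x * τ / (2 * θ / (θ - 2)) :=
        intervalIntegral.integral_mono_on ht ((hφc.min hlin).intervalIntegrable 0 t)
          (hlin.intervalIntegrable 0 t) fun τ _ => min_le_right _ _
    _ = (θ - 2) / (4 * θ) * (V x * t ^ 2) := by
        rw [show (fun τ : ℝ => V x * τ / (2 * θ / (θ - 2))) = fun τ => V x / (2 * θ / (θ - 2)) * τ
          from funext fun τ => by ring, intervalIntegral.integral_const_mul, integral_id]
        have : θ - 2 ≠ 0 := by linarith
        have : θ ≠ 0 := by linarith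
        field_simp
        ring

lemma mul_Glk_le (hφc : Continuous (flk f lam k p q)) (hφz : ∀ t ≤ 0, flk f lam k p q t = 0)
    (hφ0 : ∀ t, 0 ≤ flk f lam k p q t)
    (hAR : ∀ t, θ * (∫ τ in (0 : ℝ)..t, flk f lam k p q τ) ≤ t * flk f lam k p q t)
    (hθ : 2 < θ) (hV : 0 ≤ V x) (t : ℝ) :
    θ * Glk N V f lam k p q θ R x t
      ≤ glk N V f lam k p q θ R x t * t + (θ - 2) / 4 * (V x * t ^ 2) := by
  have hVt : 0 ≤ (θ - 2) / 4 * (V x * t ^ 2) := by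
    have : 0 ≤ θ - 2 := by linarith
    positivity
  rcases le_or_gt ‖x‖ R with hx | hx
  · rw [Glk_of_norm_le hx, glk_of_norm_le hx, mul_comm (flk f lam k p q t)]
    linarith [hAR t]
  · have hG := mul_le_mul_of_nonneg_left (Glk_le_of_norm_gt hφc hφz hθ hV hx t)
      (by linarith : 0 ≤ θ)
    have hθ' : θ * ((θ - 2) / (4 * θ) * (V x * t ^ 2)) = (θ - 2) / 4 * (V x * t ^ 2) := by
      field_simp
    linarith [glk_mul_self_nonneg (R := R) hφz hφ0 hθ hV t]

lemma glk_mul_self_le_indicator_add {a b : ℝ} (hφz : ∀ t ≤ 0, flk f lam k p q t = 0)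
    (hφ0 : ∀ t, 0 ≤ flk f lam k p q t)
    (hab : ∀ t, flk f lam k p q t * t ≤ a + b * ∫ τ in (0 : ℝ)..t, flk f lam k p q τ)
    (hb : 0 ≤ b) (hθ : 2 < θ) (hV : 0 ≤ V x) (t : ℝ) :
    glk N V f lam k p q θ R x t * t ≤ (Metric.closedBall 0 R).indicator (fun _ => a) x
      + b * Glk N V f lam k p q θ R x t + V x * t ^ 2 / (2 * θ / (θ - 2)) := by
  have hVt : 0 ≤ V x * t ^ 2 / (2 * θ / (θ - 2)) :=
    div_nonneg (by positivity) (div_nonneg (by linarith) (by linarith))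
  rcases le_or_gt ‖x‖ R with hx | hx
  · rw [Set.indicator_of_mem (mem_closedBall_zero_iff.2 hx), glk_of_norm_le hx, Glk_of_norm_le hx]
    linarith [hab t]
  · rw [Set.indicator_of_notMem (fun h => hx.not_ge (mem_closedBall_zero_iff.1 h))]
    linarith [glk_mul_self_le_of_norm_gt hφz hθ hV hx t,
      mul_nonneg hb (Glk_nonneg (R := R) hφz hφ0 hθ hV t)]

lemma measurable_glk_comp (hV : Measurable V) (hφc : Continuous (flk f lam k p q))
    {u : EuclideanSpace ℝ (Fin N) → ℝ} (hu : Measurable u) :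
    Measurable fun x => glk N V f lam k p q θ R x (u x) :=
  Measurable.ite (measurableSet_le measurable_norm measurable_const) (hφc.measurable.comp hu)
    (Measurable.ite (measurableSet_le measurable_const hu)
      ((hφc.measurable.comp hu).min ((hV.mul hu).div_const _)) measurable_const)

end Glk

section Energy

variable {N : ℕ} {K V : EuclideanSpace ℝ (Fin N) → ℝ} {u : EuclideanSpace ℝ (Fin N) → ℝ}

lemma normE_sq (hK : ∀ x, 0 ≤ K x) (hV : ∀ᵐ x, 0 ≤ V x) :
    normE N K V u ^ 2 = (∫ z : EuclideanSpace ℝ (Fin N) × EuclideanSpace ℝ (Fin N),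
      (u z.1 - u z.2) ^ 2 * K (z.1 - z.2)) + ∫ x, V x * u x ^ 2 :=
  Real.sq_sqrt (add_nonneg (integral_nonneg fun _ => mul_nonneg (sq_nonneg _) (hK _))
    (integral_nonneg_of_ae (hV.mono fun _ hx => mul_nonneg hx (sq_nonneg _))))

lemma innerE_self (hK : ∀ x, 0 ≤ K x) (hV : ∀ᵐ x, 0 ≤ V x) :
    innerE N K V u u = normE N K V u ^ 2 := by
  simp only [normE_sq hK hV, innerE, sq, mul_assoc]

lemma integral_mul_sq_le_normE_sq (hK : ∀ x, 0 ≤ K x) (hV : ∀ᵐ x, 0 ≤ V x) :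
    ∫ x, V x * u x ^ 2 ≤ normE N K V u ^ 2 := by
  rw [normE_sq hK hV]
  exact le_add_of_nonneg_left (integral_nonneg fun z => mul_nonneg (sq_nonneg _) (hK _))

variable {f : ℝ → ℝ} {lam p q θ R : ℝ} {k : ℕ}

/-- If `∫ G(x, u)` is not junk, `g(x, u) u` is dominated by `a 1_{B_R} + b G(x, u) + V u² / ν`,
hence integrable. -/
lemma mul_integral_Glk_le {a b : ℝ} (hV : Measurable V) (hV0 : ∀ᵐ x, 0 ≤ V x)
    (hφc : Continuous (flk f lam k p q)) (hφz : ∀ t ≤ 0, flk f lam k p q t = 0)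
    (hφ0 : ∀ t, 0 ≤ flk f lam k p q t)
    (hAR : ∀ t, θ * (∫ τ in (0 : ℝ)..t, flk f lam k p q τ) ≤ t * flk f lam k p q t)
    (hab : ∀ t, flk f lam k p q t * t ≤ a + b * ∫ τ in (0 : ℝ)..t, flk f lam k p q τ)
    (hb : 0 ≤ b) (hθ : 2 < θ) (hu : Measurable u) (huV : Integrable fun x => V x * u x ^ 2) :
    θ * ∫ x, Glk N V f lam k p q θ R x (u x)
      ≤ (∫ x, glk N V f lam k p q θ R x (u x) * u x) + (θ - 2) / 4 * ∫ x, V x * u x ^ 2 := by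
  have hB : 0 ≤ ∫ x, glk N V f lam k p q θ R x (u x) * u x :=
    integral_nonneg_of_ae (hV0.mono fun x hx => glk_mul_self_nonneg hφz hφ0 hθ hx _)
  have hVu : 0 ≤ (θ - 2) / 4 * ∫ x, V x * u x ^ 2 :=
    mul_nonneg (by linarith) (integral_nonneg_of_ae (hV0.mono fun x hx => by positivity))
  by_cases hG : Integrable fun x => Glk N V f lam k p q θ R x (u x)
  swap
  · rw [integral_undef hG, mul_zero]
    positivity
  have hgu : Integrable fun x => glk N V f lam k p q θ R x (u x) * u x := by
    have hind : Integrable ((Metric.closedBall (0 : EuclideanSpace ℝ (Fin N)) R).indicator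
        fun _ => a) :=
      (integrable_indicator_iff measurableSet_closedBall).2
        (integrableOn_const measure_closedBall_lt_top.ne)
    refine Integrable.mono' ((hind.add (hG.const_mul b)).add (huV.div_const (2 * θ / (θ - 2))))
      ((measurable_glk_comp hV hφc hu).mul hu).aestronglyMeasurable (hV0.mono fun x hx => ?_)
    rw [Real.norm_eq_abs, abs_of_nonneg (glk_mul_self_nonneg hφz hφ0 hθ hx _)]
    exact glk_mul_self_le_indicator_add hφz hφ0 hab hb hθ hx _
  calc θ * ∫ x, Glk N V f lam k p q θ R x (u x)
      = ∫ x, θ * Glk N V f lam k p q θ R x (u x) := (integral_const_mul _ _).symm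
    _ ≤ ∫ x, glk N V f lam k p q θ R x (u x) * u x + (θ - 2) / 4 * (V x * u x ^ 2) :=
        integral_mono_ae (hG.const_mul θ) (hgu.add (huV.const_mul _))
          (hV0.mono fun x hx => mul_Glk_le hφc hφz hφ0 hAR hθ hx _)
    _ = _ := by rw [integral_add hgu (huV.const_mul _), integral_const_mul]

lemma Jlk_sub_deriv_self_ge {a b : ℝ} (hK : ∀ x, 0 ≤ K x) (hV : Measurable V)
    (hV0 : ∀ᵐ x, 0 ≤ V x) (hφc : Continuous (flk f lam k p q))
    (hφz : ∀ t ≤ 0, flk f lam k p q t = 0) (hφ0 : ∀ t, 0 ≤ flk f lam k p q t)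
    (hAR : ∀ t, θ * (∫ τ in (0 : ℝ)..t, flk f lam k p q τ) ≤ t * flk f lam k p q t)
    (hab : ∀ t, flk f lam k p q t * t ≤ a + b * ∫ τ in (0 : ℝ)..t, flk f lam k p q τ)
    (hb : 0 ≤ b) (hθ : 2 < θ) (hu : memE N K V u) :
    Jlk N K V f lam k p q θ R u
        - (1 / θ) * (normE N K V u ^ 2 - ∫ x, glk N V f lam k p q θ R x (u x) * u x)
      ≥ (θ - 2) / (4 * θ) * normE N K V u ^ 2 := by
  have hint := mul_integral_Glk_le (R := R) hV hV0 hφc hφz hφ0 hAR hab hb hθ hu.1 hu.2.2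
  have hVu := mul_le_mul_of_nonneg_left (integral_mul_sq_le_normE_sq hK hV0 (u := u))
    (by linarith : (0 : ℝ) ≤ (θ - 2) / 4)
  have hθ0 : θ ≠ 0 := by linarith
  rw [Jlk]
  generalize ∫ x, Glk N V f lam k p q θ R x (u x) = A at *
  generalize ∫ x, glk N V f lam k p q θ R x (u x) * u x = B at *
  generalize normE N K V u ^ 2 = S at *
  rw [ge_iff_le, ← sub_nonneg, show 1 / 2 * S - A - 1 / θ * (S - B) - (θ - 2) / (4 * θ) * S
    = (B + (θ - 2) / 4 * S - θ * A) / θ by field_simp; ring]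
  exact div_nonneg (by linarith) (by linarith)

end Energy

lemma exists_forall_le_of_mul_sq_le {c : ℝ} (hc : 0 < c) {T a b : ℕ → ℝ} (hT : ∀ n, 0 ≤ T n)
    (ha : BddAbove (Set.range a)) (hb : BddAbove (Set.range b))
    (h : ∀ n, c * T n ^ 2 ≤ a n + b n * T n) : ∃ M, ∀ n, T n ≤ M := by
  obtain ⟨A, hA⟩ := ha
  obtain ⟨B, hB⟩ := hb
  refine ⟨max 1 ((|A| + |B|) / c), fun n => ?_⟩
  rcases le_or_gt (T n) 1 with hT1 | hT1
  · exact hT1.trans (le_max_left _ _)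
  have haA : a n ≤ |A| * T n :=
    (hA ⟨n, rfl⟩).trans ((le_abs_self A).trans (le_mul_of_one_le_right (abs_nonneg A) hT1.le))
  have hbB : b n * T n ≤ |B| * T n :=
    mul_le_mul_of_nonneg_right ((hB ⟨n, rfl⟩).trans (le_abs_self B)) (hT n)
  have hcT : T n * c * T n ≤ (|A| + |B|) * T n := by
    linarith [h n, show T n * c * T n = c * T n ^ 2 by ring, add_mul |A| |B| (T n)]
  exact le_max_of_le_right ((le_div_iff₀ hc).2 (le_of_mul_le_mul_right hcT (by linarith)))

theorem statement_5_general (N : ℕ)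
    (K : EuclideanSpace ℝ (Fin N) → ℝ)
    (hK_pos : ∀ x, 0 < K x)
    (f : ℝ → ℝ) (hf_cont : Continuous f)
    (hf_nonneg : ∀ t : ℝ, 0 < t → 0 ≤ f t)
    (hf_zero : ∀ t : ℝ, t ≤ 0 → f t = 0)
    (p : ℝ)
    (hf1_infty : ∃ C : ℝ, ∀ᶠ t in atTop, f t ≤ C * t ^ (p - 1))
    (θ : ℝ) (hθ2 : 2 < θ) (hθp : θ < p)
    (hf2 : ∀ t : ℝ, θ * (∫ τ in (0 : ℝ)..t, f τ) ≤ t * f t)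
    (V : EuclideanSpace ℝ (Fin N) → ℝ) (hV_meas : Measurable V)
    (hV_nonneg : ∀ᵐ x : EuclideanSpace ℝ (Fin N), 0 ≤ V x)
    (R : ℝ)
    (lam : ℝ) (hlam : 0 < lam) (k : ℕ) (hk : 0 < k) (q : ℝ) (hq : p < q) :
    (∀ u : EuclideanSpace ℝ (Fin N) → ℝ, memE N K V u →
      ((1 / 2) * (normE N K V u) ^ 2 - ∫ x, Glk N V f lam k p q θ R x (u x)) -
        (1 / θ) * ((normE N K V u) ^ 2 - ∫ x, glk N V f lam k p q θ R x (u x) * u x) ≥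
        ((θ - 2) / (4 * θ)) * (normE N K V u) ^ 2) ∧
    (∀ u : ℕ → EuclideanSpace ℝ (Fin N) → ℝ,
      (∀ n, memE N K V (u n)) →
      (∃ c : ℝ, Tendsto (fun n => Jlk N K V f lam k p q θ R (u n)) atTop (𝓝 c)) →
      (∃ ε : ℕ → ℝ, Tendsto ε atTop (𝓝 0) ∧
        ∀ n, ∀ v : EuclideanSpace ℝ (Fin N) → ℝ, memE N K V v →
          |innerE N K V (u n) v - ∫ x, glk N V f lam k p q θ R x (u n x) * v x| ≤
            ε n * normE N K V v) →
      ∃ M : ℝ, ∀ n, normE N K V (u n) ≤ M) := by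
  have hp : 1 < p := by linarith
  have hq1 : 1 < q := hp.trans hq
  have hθ : 0 < θ := by linarith
  have hK : ∀ x, 0 ≤ K x := fun x => (hK_pos x).le
  have hf0 (t : ℝ) (ht : 0 ≤ t) : 0 ≤ f t :=
    ht.eq_or_lt.elim (fun h => (hf_zero t h.ge).ge) (hf_nonneg t)
  obtain ⟨C, hC⟩ := hf1_infty
  obtain ⟨a, b, hb, hab⟩ := exists_flk_mul_le_add_integral hf_cont hf0 hf_zero hC hk hlam hp hq
  have coercive (u) (hu : memE N K V u) := Jlk_sub_deriv_self_ge (R := R) hK hV_meas hV_nonneg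
    (continuous_flk hf_cont hf_zero hk hp hq1) (fun t => flk_eq_zero_of_nonpos hf_zero hq1)
    (flk_nonneg hf0 hlam.le)
    (mul_integral_flk_le hf_cont hf_zero hf2 hk hlam.le hp hθ.le hθp.le hq) hab hb
    hθ2 hu
  refine ⟨coercive, ?_⟩
  rintro u hu ⟨c, hJ⟩ ⟨ε, hε, hPS⟩
  refine exists_forall_le_of_mul_sq_le (c := (θ - 2) / (4 * θ)) (by positivity)
    (fun n => Real.sqrt_nonneg _) hJ.bddAbove_range (hε.div_const θ).bddAbove_range fun n => ?_
  have hPSn := (abs_le.1 (hPS n (u n) (hu n))).1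
  rw [innerE_self hK hV_nonneg] at hPSn
  have hdiv := mul_le_mul_of_nonneg_left hPSn (by positivity : (0 : ℝ) ≤ 1 / θ)
  linarith [coercive (u n) (hu n),
    show 1 / θ * -(ε n * normE N K V (u n)) = -(ε n / θ * normE N K V (u n)) by ring]

/-- Coercivity inequality for `J_{λ,k}` and boundedness of
Palais–Smale sequences. -/
theorem statement_5 (N : ℕ) (s : ℝ) (hs0 : 0 < s) (hs1 : s < 1) (hN : 2 * s < N)
    (K : EuclideanSpace ℝ (Fin N) → ℝ) (hK_meas : Measurable K)
    (hK_pos : ∀ x, 0 < K x)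
    (hK1 : ∀ x, K (-x) = K x)
    (hK2 : ∃ C₁ > (0 : ℝ), ∀ᵐ x : EuclideanSpace ℝ (Fin N),
      C₁ * ‖x‖ ^ (-((N : ℝ) + 2 * s)) ≤ K x)
    (hK3 : Integrable (fun x : EuclideanSpace ℝ (Fin N) => min (‖x‖ ^ 2) 1 * K x))
    (f : ℝ → ℝ) (hf_cont : Continuous f) (hf_ne : ∃ t : ℝ, f t ≠ 0)
    (hf_nonneg : ∀ t : ℝ, 0 < t → 0 ≤ f t)
    (hf_zero : ∀ t : ℝ, t ≤ 0 → f t = 0)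
    (p : ℝ) (hp2 : 2 < p) (hps : p < 2 * N / (N - 2 * s))
    (hf1_zero : ∃ C : ℝ, ∀ᶠ t in 𝓝[>] (0 : ℝ), f t ≤ C * t ^ (2 * N / (N - 2 * s) - 1))
    (hf1_infty : ∃ C : ℝ, ∀ᶠ t in atTop, f t ≤ C * t ^ (p - 1))
    (θ : ℝ) (hθ2 : 2 < θ) (hθp : θ < p)
    (hf2 : ∀ t : ℝ, θ * (∫ τ in (0 : ℝ)..t, f τ) ≤ t * f t)
    (V : EuclideanSpace ℝ (Fin N) → ℝ) (hV_meas : Measurable V)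
    (hV_nonneg : ∀ᵐ x : EuclideanSpace ℝ (Fin N), 0 ≤ V x)
    (hV_locbdd : ∀ r : ℝ, ∃ C : ℝ, ∀ᵐ x : EuclideanSpace ℝ (Fin N), ‖x‖ ≤ r → V x ≤ C)
    (R : ℝ) (hR : 1 < R)
    (lam : ℝ) (hlam : 0 < lam) (k : ℕ) (hk : 0 < k) (q : ℝ) (hq : p < q) :
    (∀ u : EuclideanSpace ℝ (Fin N) → ℝ, memE N K V u →
      ((1 / 2) * (normE N K V u) ^ 2 - ∫ x, Glk N V f lam k p q θ R x (u x)) -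
        (1 / θ) * ((normE N K V u) ^ 2 - ∫ x, glk N V f lam k p q θ R x (u x) * u x) ≥
        ((θ - 2) / (4 * θ)) * (normE N K V u) ^ 2) ∧
    (∀ u : ℕ → EuclideanSpace ℝ (Fin N) → ℝ,
      (∀ n, memE N K V (u n)) →
      (∃ c : ℝ, Tendsto (fun n => Jlk N K V f lam k p q θ R (u n)) atTop (𝓝 c)) →
      (∃ ε : ℕ → ℝ, Tendsto ε atTop (𝓝 0) ∧
        ∀ n, ∀ v : EuclideanSpace ℝ (Fin N) → ℝ, memE N K V v →
          |innerE N K V (u n) v - ∫ x, glk N V f lam k p q θ R x (u n x) * v x| ≤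
            ε n * normE N K V v) →
      ∃ M : ℝ, ∀ n, normE N K V (u n) ≤ M) :=
  statement_5_general N K hK_pos f hf_cont hf_nonneg hf_zero p hf1_infty θ hθ2 hθp hf2 V hV_meas
    hV_nonneg R lam hlam k hk q hq
end
end

section
/- If t, τ ∈ ℝ satisfy |t| > n^{1/(β−1)} and |τ| ≤ n^{1/(β−1)}, then h(t,τ) := 2(nt − τ|τ|^{β−1})² − C_β (t−τ)(n²t − τ|τ|^{2(β−1)}) ≤ 0. -/
/-!
Writing `γ = β - 1`, `M = n^{1/γ}` and `p = |τ|^γ`, one has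
`h(t,τ) = 2 t τ (n - p)² - c (t - τ)(n² t - τ p²)` with `c = 2γ²/(2γ+1)`, and `h(-t,-τ) = h(t,τ)`.
So we may take `t > M`, and only `0 < τ ≤ M` is not obvious. Scaling by `M` reduces this to
`(2γ+1) s x (1 - y)² ≤ γ² (s - x)(s - x y²)` for `0 < x ≤ 1 ≤ s` and `y = x^γ`: a quadratic in `s`
with leading coefficient `γ²` whose slope at `s = 1` exceeds its value there. Putting `x = e^{-u}`,
the case `s = 1` is the inequality `(γ+1)² (cosh γu - 1) ≤ γ² (cosh (γ+1)u - 1)`, i.e. the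
monotonicity of `a ↦ (cosh a u - 1)/a²`, proved by differentiating in `u` twice.
-/

open Real

lemma le_of_hasDerivAt_of_nonneg {f f' : ℝ → ℝ} (hf : ∀ x, HasDerivAt f (f' x) x)
    (hf' : ∀ x, 0 < x → 0 ≤ f' x) {u : ℝ} (hu : 0 ≤ u) : f 0 ≤ f u :=
  monotoneOn_of_hasDerivWithinAt_nonneg (convex_Ici 0)
    (fun x _ => (hf x).continuousAt.continuousWithinAt) (fun x _ => (hf x).hasDerivWithinAt)
    (fun x hx => hf' x (by simpa using hx)) Set.self_mem_Ici hu hu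

lemma mul_sinh_le_mul_sinh {a b u : ℝ} (ha : 0 ≤ a) (hab : a ≤ b) (hu : 0 ≤ u) :
    b * sinh (a * u) ≤ a * sinh (b * u) := by
  have hderiv (v : ℝ) : HasDerivAt (fun v => a * sinh (b * v) - b * sinh (a * v))
      (a * b * (cosh (b * v) - cosh (a * v))) v :=
    (((((hasDerivAt_id' v).const_mul b).sinh).const_mul a).sub
      ((((hasDerivAt_id' v).const_mul a).sinh).const_mul b)).congr_deriv (by ring)
  have key := le_of_hasDerivAt_of_nonneg hderiv (fun v hv => by
    have hcosh : cosh (a * v) ≤ cosh (b * v) := by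
      rw [cosh_le_cosh, abs_of_nonneg (by positivity), abs_of_nonneg (by nlinarith)]
      nlinarith
    exact mul_nonneg (by nlinarith) (sub_nonneg.2 hcosh)) hu
  simp only [mul_zero, sinh_zero, sub_zero] at key
  linarith

lemma sq_mul_cosh_sub_one_le {a b u : ℝ} (ha : 0 ≤ a) (hab : a ≤ b) (hu : 0 ≤ u) :
    b ^ 2 * (cosh (a * u) - 1) ≤ a ^ 2 * (cosh (b * u) - 1) := by
  have hderiv (v : ℝ) :
      HasDerivAt (fun v => a ^ 2 * (cosh (b * v) - 1) - b ^ 2 * (cosh (a * v) - 1))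
      (a * b * (a * sinh (b * v) - b * sinh (a * v))) v :=
    ((((((hasDerivAt_id' v).const_mul b).cosh).sub_const 1).const_mul (a ^ 2)).sub
      (((((hasDerivAt_id' v).const_mul a).cosh).sub_const 1).const_mul (b ^ 2))).congr_deriv
      (by ring)
  have key := le_of_hasDerivAt_of_nonneg hderiv (fun v hv =>
    mul_nonneg (by nlinarith) (sub_nonneg.2 (mul_sinh_le_mul_sinh ha hab hv.le))) hu
  simp only [mul_zero, cosh_zero, sub_self] at key
  linarith

lemma two_mul_exp_neg_mul_cosh_sub_one (z : ℝ) :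
    2 * exp (-z) * (cosh z - 1) = (1 - exp (-z)) ^ 2 := by
  rw [cosh_eq, exp_neg]
  field_simp
  ring

lemma mul_one_sub_rpow_sq_le {γ x : ℝ} (hγ : 0 ≤ γ) (hx0 : 0 ≤ x) (hx1 : x ≤ 1) :
    (2 * γ + 1) * (x * (1 - x ^ γ) ^ 2) ≤ γ ^ 2 * ((1 - x) * (1 - x * (x ^ γ) ^ 2)) := by
  rcases hx0.eq_or_lt with rfl | hx
  · simp only [zero_mul, mul_zero, sub_zero, mul_one]
    positivity
  set u := -log x with hu
  have hx_eq : x = exp (-u) := by rw [neg_neg, exp_log hx]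
  have hy_eq : x ^ γ = exp (-(γ * u)) := by rw [rpow_def_of_pos hx, hu]; ring_nf
  have hxy_eq : x * x ^ γ = exp (-((γ + 1) * u)) := by
    rw [hy_eq, hx_eq, ← exp_add]; ring_nf
  have hcosh := sq_mul_cosh_sub_one_le hγ (le_add_of_nonneg_right zero_le_one)
    (neg_nonneg.2 (log_nonpos hx0 hx1) : 0 ≤ u)
  have e₁ := two_mul_exp_neg_mul_cosh_sub_one (γ * u)
  have e₂ := two_mul_exp_neg_mul_cosh_sub_one ((γ + 1) * u)
  rw [← hy_eq] at e₁
  rw [← hxy_eq] at e₂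
  have hsq : (γ + 1) ^ 2 * (x * (1 - x ^ γ) ^ 2) ≤ γ ^ 2 * (1 - x * x ^ γ) ^ 2 := by
    have := mul_le_mul_of_nonneg_left hcosh (by positivity : 0 ≤ 2 * x * x ^ γ)
    rw [← e₁, ← e₂]
    linarith
  linear_combination hsq

lemma mul_mul_one_sub_sq_le_of_one_le {c d x y s : ℝ} (hc : 0 ≤ c) (hxy : (x * y) ^ 2 ≤ 1)
    (hs : 1 ≤ s) (h : d * (x * (1 - y) ^ 2) ≤ c * ((1 - x) * (1 - x * y ^ 2))) :
    d * (s * x * (1 - y) ^ 2) ≤ c * ((s - x) * (s - x * y ^ 2)) := by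
  nlinarith [mul_nonneg (sub_nonneg.2 hs) (sub_nonneg.2 h),
    mul_nonneg (mul_nonneg hc (sub_nonneg.2 hs)) (sub_nonneg.2 hxy),
    mul_nonneg hc (sq_nonneg (s - 1))]

lemma mul_mul_rpow_sub_sq_le_of_le {γ M t τ : ℝ} (hγ : 0 ≤ γ) (ht : M ≤ t) (hτ : |τ| ≤ M) :
    (2 * γ + 1) * (t * τ * (M ^ γ - |τ| ^ γ) ^ 2) ≤
      γ ^ 2 * ((t - τ) * ((M ^ γ) ^ 2 * t - τ * (|τ| ^ γ) ^ 2)) := by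
  have hM : 0 ≤ M := (abs_nonneg τ).trans hτ
  rcases le_or_gt τ 0 with hτ0 | hτ0
  · have hlhs : t * τ * (M ^ γ - |τ| ^ γ) ^ 2 ≤ 0 :=
      mul_nonpos_of_nonpos_of_nonneg (mul_nonpos_of_nonneg_of_nonpos (hM.trans ht) hτ0)
        (sq_nonneg _)
    have hrhs : 0 ≤ (t - τ) * ((M ^ γ) ^ 2 * t - τ * (|τ| ^ γ) ^ 2) := by
      have := hM.trans ht
      apply mul_nonneg (by linarith)
      nlinarith [mul_nonneg (sq_nonneg (M ^ γ)) this,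
        mul_nonneg (neg_nonneg.2 hτ0) (sq_nonneg (|τ| ^ γ))]
    nlinarith [mul_nonneg (sq_nonneg γ) hrhs]
  have hMpos : 0 < M := hτ0.trans_le ((le_abs_self τ).trans hτ)
  obtain ⟨x, rfl⟩ : ∃ x, τ = x * M := ⟨τ / M, (div_mul_cancel₀ τ hMpos.ne').symm⟩
  obtain ⟨s, rfl⟩ : ∃ s, t = s * M := ⟨t / M, (div_mul_cancel₀ t hMpos.ne').symm⟩
  have hx0 : 0 ≤ x := (pos_of_mul_pos_left hτ0 hMpos.le).le
  rw [abs_of_pos hτ0] at hτ ⊢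
  have hx1 : x ≤ 1 := by nlinarith
  have hs : 1 ≤ s := by nlinarith
  have hy0 : 0 ≤ x ^ γ := rpow_nonneg hx0 γ
  have hy1 : x ^ γ ≤ 1 := rpow_le_one hx0 hx1 hγ
  have hxy : (x * x ^ γ) ^ 2 ≤ 1 := pow_le_one₀ (mul_nonneg hx0 hy0) (mul_le_one₀ hx1 hy0 hy1)
  have key := mul_mul_one_sub_sq_le_of_one_le (sq_nonneg γ) hxy hs
    (mul_one_sub_rpow_sq_le hγ hx0 hx1)
  rw [mul_rpow hx0 hMpos.le]
  calc (2 * γ + 1) * (s * M * (x * M) * (M ^ γ - x ^ γ * M ^ γ) ^ 2)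
      = (M * M ^ γ) ^ 2 * ((2 * γ + 1) * (s * x * (1 - x ^ γ) ^ 2)) := by ring
    _ ≤ (M * M ^ γ) ^ 2 * (γ ^ 2 * ((s - x) * (s - x * (x ^ γ) ^ 2))) :=
      mul_le_mul_of_nonneg_left key (sq_nonneg _)
    _ = _ := by ring

lemma mul_mul_rpow_sub_sq_le_of_le_abs {γ M t τ : ℝ} (hγ : 0 ≤ γ) (ht : M ≤ |t|) (hτ : |τ| ≤ M) :
    (2 * γ + 1) * (t * τ * (M ^ γ - |τ| ^ γ) ^ 2) ≤
      γ ^ 2 * ((t - τ) * ((M ^ γ) ^ 2 * t - τ * (|τ| ^ γ) ^ 2)) := by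
  rcases le_or_gt 0 t with ht0 | ht0
  · exact mul_mul_rpow_sub_sq_le_of_le hγ (ht.trans_eq (abs_of_nonneg ht0)) hτ
  · have h := mul_mul_rpow_sub_sq_le_of_le hγ (ht.trans_eq (abs_of_neg ht0))
      ((abs_neg τ).le.trans hτ)
    rw [abs_neg] at h
    linarith

theorem statement_6_general (β : ℝ) (hβ : 1 < β) (n : ℕ)
    (t τ : ℝ) (ht : (n : ℝ) ^ ((1 : ℝ) / (β - 1)) < |t|)
    (hτ : |τ| ≤ (n : ℝ) ^ ((1 : ℝ) / (β - 1))) :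
    2 * ((n : ℝ) * t - τ * |τ| ^ (β - 1)) ^ 2 -
      (2 + 2 * (β - 1) ^ 2 / (2 * β - 1)) * (t - τ) *
        ((n : ℝ) ^ 2 * t - τ * |τ| ^ (2 * (β - 1))) ≤ 0 := by
  have hγ : 0 ≤ β - 1 := by linarith
  have key := mul_mul_rpow_sub_sq_le_of_le_abs hγ ht.le hτ
  rw [one_div, rpow_inv_rpow n.cast_nonneg (by linarith),
    show 2 * (β - 1) + 1 = 2 * β - 1 by ring] at key
  have hsq : |τ| ^ (2 * (β - 1)) = (|τ| ^ (β - 1)) ^ 2 := by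
    rw [mul_comm, ← rpow_mul_natCast (abs_nonneg τ)]; norm_num
  have hdiv : 2 * (t * τ * ((n : ℝ) - |τ| ^ (β - 1)) ^ 2) ≤ 2 * (β - 1) ^ 2 / (2 * β - 1) *
      ((t - τ) * ((n : ℝ) ^ 2 * t - τ * (|τ| ^ (β - 1)) ^ 2)) := by
    rw [div_mul_eq_mul_div, le_div_iff₀ (by linarith)]
    linarith
  rw [hsq]
  linear_combination hdiv

/-- `h(t,τ) ≤ 0` whenever `|t| > n^{1/(β−1)}` and `|τ| ≤ n^{1/(β−1)}`. -/
theorem statement_6 (β : ℝ) (hβ : 1 < β) (n : ℕ) (hn : 0 < n)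
    (t τ : ℝ) (ht : (n : ℝ) ^ ((1 : ℝ) / (β - 1)) < |t|)
    (hτ : |τ| ≤ (n : ℝ) ^ ((1 : ℝ) / (β - 1))) :
    2 * ((n : ℝ) * t - τ * |τ| ^ (β - 1)) ^ 2 -
      (2 + 2 * (β - 1) ^ 2 / (2 * β - 1)) * (t - τ) *
        ((n : ℝ) ^ 2 * t - τ * |τ| ^ (2 * (β - 1))) ≤ 0 :=
  statement_6_general β hβ n t τ ht hτ
end

section
/- For every τ ∈ [0, n^{1/(β−1)}] one has C_β n² + (2β−1) C_β τ^{2(β−1)} > 4βn τ^{β−1}; that is, the derivative of the function q_β(τ) := −4n τ^β + C_β n² τ + C_β τ^{2β−1} is strictly positive on [0, n^{1/(β−1)}]. -/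
/-! Since `(2β - 1) C_β = 2β²`, the right-hand side is `C_β n² + 2(β x)²` with `x = τ^(β-1)`.
As `C_β > 2` and `n > 0`, it exceeds `2n² + 2(β x)² ≥ 4 n (β x)`. -/

lemma two_lt_two_add_sq_div {β : ℝ} (hβ : 1 < β) : 2 < 2 + 2 * (β - 1) ^ 2 / (2 * β - 1) := by
  have hsq : 0 < 2 * (β - 1) ^ 2 := by nlinarith
  linarith [div_pos hsq (by linarith : (0 : ℝ) < 2 * β - 1)]

lemma mul_two_add_sq_div_eq {β : ℝ} (hβ : 2 * β - 1 ≠ 0) :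
    (2 * β - 1) * (2 + 2 * (β - 1) ^ 2 / (2 * β - 1)) = 2 * β ^ 2 := by
  field_simp
  ring

lemma four_mul_lt_of_two_lt {a b x C : ℝ} (ha : a ≠ 0) (hC : 2 < C) :
    4 * b * a * x < C * a ^ 2 + 2 * b ^ 2 * x ^ 2 := by
  have ha2 : 0 < a ^ 2 := by positivity
  nlinarith [sq_nonneg (a - b * x), mul_lt_mul_of_pos_right hC ha2]

theorem statement_7_general (β : ℝ) (hβ : 1 < β) (n : ℕ) (hn : 0 < n)
    (τ : ℝ) (hτ0 : 0 ≤ τ) :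
    4 * β * (n : ℝ) * τ ^ (β - 1) <
      (2 + 2 * (β - 1) ^ 2 / (2 * β - 1)) * (n : ℝ) ^ 2 +
        (2 * β - 1) * (2 + 2 * (β - 1) ^ 2 / (2 * β - 1)) * τ ^ (2 * (β - 1)) := by
  have hsq : τ ^ (2 * (β - 1)) = (τ ^ (β - 1)) ^ 2 := by
    rw [mul_comm, ← Nat.cast_ofNat, Real.rpow_mul_natCast hτ0]
  rw [hsq, mul_two_add_sq_div_eq (by linarith)]
  exact four_mul_lt_of_two_lt (by positivity) (two_lt_two_add_sq_div hβ)

/-- The derivative `q_β'(τ) = −4βn τ^{β−1} + C_β n² + (2β−1) C_β τ^{2(β−1)}`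
of `q_β` is strictly positive on `[0, n^{1/(β−1)}]`. -/
theorem statement_7 (β : ℝ) (hβ : 1 < β) (n : ℕ) (hn : 0 < n)
    (τ : ℝ) (hτ0 : 0 ≤ τ) (hτ : τ ≤ (n : ℝ) ^ ((1 : ℝ) / (β - 1))) :
    4 * β * (n : ℝ) * τ ^ (β - 1) <
      (2 + 2 * (β - 1) ^ 2 / (2 * β - 1)) * (n : ℝ) ^ 2 +
        (2 * β - 1) * (2 + 2 * (β - 1) ^ 2 / (2 * β - 1)) * τ ^ (2 * (β - 1)) :=
  statement_7_general β hβ n hn τ hτ0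
end

section
/- For all real numbers x and y, 2(x|x|^{β−1} − y|y|^{β−1})² ≤ C_β (x−y)(x|x|^{2(β−1)} − y|y|^{2(β−1)}). -/
/-!
Write `p = β - 1`. Since `s ↦ s |s|^q` is an antiderivative of `(q + 1) |s|^q`, we have
`x|x|^p − y|y|^p = β ∫_y^x |s|^p` and
`x|x|^{2p} − y|y|^{2p} = (2β − 1) ∫_y^x (|s|^p)²`.
The inequality is then Cauchy–Schwarz `(∫_y^x g)² ≤ (x − y) ∫_y^x g²` for `g = |s|^p`,
because `C_β (2β − 1) = 2β²`.
-/

open MeasureTheory intervalIntegral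

theorem sq_intervalIntegral_le_of_le {f : ℝ → ℝ} {a b : ℝ} (hab : a ≤ b)
    (hf : IntervalIntegrable f volume a b)
    (hf2 : IntervalIntegrable (fun s => f s ^ 2) volume a b) :
    (∫ s in a..b, f s) ^ 2 ≤ (b - a) * ∫ s in a..b, f s ^ 2 := by
  -- `c ↦ ∫ (f - c)²` is a nonnegative quadratic, so its discriminant is nonpositive.
  have hquad : ∀ c : ℝ,
      0 ≤ (b - a) * (c * c) + (-2 * ∫ s in a..b, f s) * c + ∫ s in a..b, f s ^ 2 := by
    intro c
    have hexpand : ∫ s in a..b, (f s - c) ^ 2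
        = (b - a) * (c * c) + (-2 * ∫ s in a..b, f s) * c + ∫ s in a..b, f s ^ 2 := by
      have hpt : (fun s => (f s - c) ^ 2) = fun s => f s ^ 2 + ((-2 * c) * f s + c ^ 2) := by
        funext s; ring
      rw [hpt, integral_add hf2 ((hf.const_mul _).add intervalIntegrable_const),
        integral_add (hf.const_mul _) intervalIntegrable_const, intervalIntegral.integral_const_mul,
        intervalIntegral.integral_const, smul_eq_mul]
      ring
    exact hexpand ▸ integral_nonneg hab fun s _ => sq_nonneg (f s - c)
  have hdiscrim := discrim_le_zero hquad
  rw [discrim] at hdiscrim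
  linarith

theorem sq_intervalIntegral_le {f : ℝ → ℝ} {a b : ℝ}
    (hf : IntervalIntegrable f volume a b)
    (hf2 : IntervalIntegrable (fun s => f s ^ 2) volume a b) :
    (∫ s in a..b, f s) ^ 2 ≤ (b - a) * ∫ s in a..b, f s ^ 2 := by
  rcases le_total a b with hab | hba
  · exact sq_intervalIntegral_le_of_le hab hf hf2
  · have h := sq_intervalIntegral_le_of_le hba hf.symm hf2.symm
    rw [integral_symm a b, integral_symm a b (f := fun s => f s ^ 2), neg_sq] at h
    linarith

theorem integral_zero_abs_rpow_of_nonneg {p t : ℝ} (hp : 0 ≤ p) (ht : 0 ≤ t) :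
    ∫ s in (0 : ℝ)..t, |s| ^ p = t * |t| ^ p / (p + 1) := by
  have hEq : Set.EqOn (fun s : ℝ => |s| ^ p) (fun s => s ^ p) (Set.uIcc 0 t) := fun s hs => by
    rw [Set.uIcc_of_le ht] at hs
    simp only [abs_of_nonneg hs.1]
  rw [integral_congr hEq, integral_rpow (Or.inl (by linarith)), Real.zero_rpow (by linarith),
    Real.rpow_add' ht (by linarith), Real.rpow_one, abs_of_nonneg ht]
  ring

theorem integral_zero_abs_rpow {p : ℝ} (hp : 0 ≤ p) (t : ℝ) :
    ∫ s in (0 : ℝ)..t, |s| ^ p = t * |t| ^ p / (p + 1) := by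
  rcases le_total 0 t with ht | ht
  · exact integral_zero_abs_rpow_of_nonneg hp ht
  · have heven := integral_comp_neg (a := 0) (b := t) fun s : ℝ => |s| ^ p
    simp only [abs_neg, neg_zero] at heven
    rw [heven, integral_symm, integral_zero_abs_rpow_of_nonneg hp (neg_nonneg.2 ht), abs_neg]
    ring

theorem integral_abs_rpow {p : ℝ} (hp : 0 ≤ p) (a b : ℝ) :
    ∫ s in a..b, |s| ^ p = (b * |b| ^ p - a * |a| ^ p) / (p + 1) := by
  have hcont : Continuous fun s : ℝ => |s| ^ p := continuous_abs.rpow_const fun _ => Or.inr hp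
  rw [← integral_add_adjacent_intervals (hcont.intervalIntegrable a 0)
    (hcont.intervalIntegrable 0 b), integral_symm, integral_zero_abs_rpow hp,
    integral_zero_abs_rpow hp]
  ring

/-- For all real `x, y`:
`2(x|x|^{β−1} − y|y|^{β−1})² ≤ C_β (x−y)(x|x|^{2(β−1)} − y|y|^{2(β−1)})`. -/
theorem statement_9 (β : ℝ) (hβ : 1 < β) (x y : ℝ) :
    2 * (x * |x| ^ (β - 1) - y * |y| ^ (β - 1)) ^ 2 ≤
      (2 + 2 * (β - 1) ^ 2 / (2 * β - 1)) * (x - y) *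
        (x * |x| ^ (2 * (β - 1)) - y * |y| ^ (2 * (β - 1))) := by
  have hp : 0 ≤ β - 1 := by linarith
  have h2β : 2 * β - 1 ≠ 0 := by linarith
  have hφ : x * |x| ^ (β - 1) - y * |y| ^ (β - 1) = β * ∫ s in y..x, |s| ^ (β - 1) := by
    rw [integral_abs_rpow hp]
    field_simp
    ring
  have hψ : x * |x| ^ (2 * (β - 1)) - y * |y| ^ (2 * (β - 1))
      = (2 * β - 1) * ∫ s in y..x, (|s| ^ (β - 1)) ^ 2 := by
    have hsq (s : ℝ) : (|s| ^ (β - 1)) ^ 2 = |s| ^ (2 * (β - 1)) := by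
      rw [← Real.rpow_mul_natCast (abs_nonneg s), Nat.cast_ofNat, mul_comm]
    simp_rw [hsq]
    rw [integral_abs_rpow (by positivity)]
    field_simp
    ring
  have hcont : Continuous fun s : ℝ => |s| ^ (β - 1) :=
    continuous_abs.rpow_const fun _ => Or.inr hp
  have hcs := sq_intervalIntegral_le (hcont.intervalIntegrable y x)
    ((hcont.pow 2).intervalIntegrable y x)
  have hC : (2 + 2 * (β - 1) ^ 2 / (2 * β - 1)) * (2 * β - 1) = 2 * β ^ 2 := by
    field_simp
    ring
  rw [hφ, hψ]
  calc 2 * (β * ∫ s in y..x, |s| ^ (β - 1)) ^ 2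
      = 2 * β ^ 2 * (∫ s in y..x, |s| ^ (β - 1)) ^ 2 := by ring
    _ ≤ 2 * β ^ 2 * ((x - y) * ∫ s in y..x, (|s| ^ (β - 1)) ^ 2) := by gcongr
    _ = _ := by rw [← hC]; ring
end
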